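/- Let H be the graph obtained from K_{3,3} by removing one edge yz and adding a new vertex x adjacent exactly to y and z. Then H is a triangle-free edge-minimal 2-self-centered graph in which x is the unique common neighbor of the non-adjacent vertices y and z. -/

import Mathlib

/-! Any two vertices of the graph are equal, adjacent or have a common neighbour, and no vertex is
adjacent to all the others, so every eccentricity is 2. Because the graph is triangle-free, the two
ends of an edge have no common neighbour, so deleting any edge leaves them at distance at least 3. -/

open SimpleGraph

variable {V : Type*}

/-- Eccentricity of a vertex: maximum distance to any vertex. -/
noncomputable def ecc (G : SimpleGraph V) [Fintype V] (v : V) : ℕ :=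
  Finset.univ.sup fun u => G.dist v u

/-- Diameter: maximum eccentricity. -/
noncomputable def gdiam (G : SimpleGraph V) [Fintype V] : ℕ :=
  Finset.univ.sup fun v => ecc G v

/-- Radius: minimum eccentricity. -/
noncomputable def grad (G : SimpleGraph V) [Fintype V] : ℕ :=
  sInf (Set.range fun v => ecc G v)

/-- A graph is 2-self-centered if it is connected and diam = rad = 2. -/
def TwoSC (G : SimpleGraph V) [Fintype V] : Prop :=
  G.Connected ∧ gdiam G = 2 ∧ grad G = 2

/-- The graph of Example 2: K_{3,3} with parts {0,1,2}, {3,4,5}, with the edge y z = 03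
removed, and a new vertex x = 6 adjacent exactly to y = 0 and z = 3. -/
def exampleGraph2 : SimpleGraph (Fin 7) :=
  SimpleGraph.fromEdgeSet
    {s(0, 4), s(0, 5), s(1, 3), s(1, 4), s(1, 5), s(2, 3), s(2, 4), s(2, 5), s(6, 0), s(6, 3)}

lemma SimpleGraph.edist_le_two_iff {G : SimpleGraph V} {u v : V} :
    G.edist u v ≤ 2 ↔ u = v ∨ G.Adj u v ∨ ∃ w, G.Adj u w ∧ G.Adj w v := by
  rw [le_iff_lt_or_eq, ← one_add_one_eq_two, ENat.lt_add_one_iff ENat.one_ne_top,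
    one_add_one_eq_two, edist_le_one_iff_adj_or_eq, edist_eq_two_iff, Set.Nonempty]
  simp only [mem_commonNeighbors, G.adj_comm v]
  tauto

section
variable {G : SimpleGraph V} [Fintype V]

lemma dist_le_ecc (u v : V) : G.dist u v ≤ ecc G u :=
  Finset.le_sup (Finset.mem_univ v)

lemma ecc_le_gdiam (v : V) : ecc G v ≤ gdiam G :=
  Finset.le_sup (Finset.mem_univ v)

lemma gdiam_eq_of_forall_ecc_eq [Nonempty V] {n : ℕ} (h : ∀ v, ecc G v = n) : gdiam G = n := by
  obtain ⟨v⟩ := ‹Nonempty V›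
  exact le_antisymm (Finset.sup_le fun w _ => (h w).le) (h v ▸ ecc_le_gdiam v)

lemma grad_eq_of_forall_ecc_eq [Nonempty V] {n : ℕ} (h : ∀ v, ecc G v = n) : grad G = n := by
  rw [grad, funext h, Set.range_const, csInf_singleton]

lemma TwoSC.edist_le_two (hG : TwoSC G) (u v : V) : G.edist u v ≤ 2 := by
  obtain ⟨hconn, hdiam, -⟩ := hG
  rw [← (hconn u v).coe_dist_eq_edist]
  exact_mod_cast hdiam ▸ (dist_le_ecc u v).trans (ecc_le_gdiam u)

lemma TwoSC.of_edist_le_two [Nonempty V] (hle : ∀ u v, G.edist u v ≤ 2)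
    (hdom : ∀ u, ∃ v, u ≠ v ∧ ¬G.Adj u v) : TwoSC G := by
  have hreach (u v : V) : G.Reachable u v :=
    edist_ne_top_iff_reachable.mp (ne_top_of_le_ne_top (by simp) (hle u v))
  have hecc (u : V) : ecc G u = 2 := by
    obtain ⟨v, hne, hnadj⟩ := hdom u
    have hdist (w : V) : G.dist u w ≤ 2 := by
      exact_mod_cast (hreach u w).coe_dist_eq_edist ▸ hle u w
    have h0 : G.dist u v ≠ 0 := ((hreach u v).dist_eq_zero_iff).not.mpr hne
    have h1 : G.dist u v ≠ 1 := dist_eq_one_iff_adj.not.mpr hnadj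
    refine le_antisymm (Finset.sup_le fun w _ => hdist w) ?_
    exact le_trans (by omega) (dist_le_ecc u v)
  exact ⟨⟨hreach⟩, gdiam_eq_of_forall_ecc_eq hecc, grad_eq_of_forall_ecc_eq hecc⟩

end

lemma SimpleGraph.CliqueFree.not_twoSC_deleteEdges [Fintype V] {G : SimpleGraph V}
    (hG : G.CliqueFree 3) {e : Sym2 V} (he : e ∈ G.edgeSet) : ¬TwoSC (G.deleteEdges {e}) := by
  induction e using Sym2.ind with
  | h a b =>
    rw [mem_edgeSet] at he
    intro h
    rcases edist_le_two_iff.mp (h.edist_le_two a b) with hab | hab | ⟨w, haw, hwb⟩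
    · exact he.ne hab
    · simp at hab
    · classical
      simp only [deleteEdges_adj] at haw hwb
      exact hG {a, w, b} (is3Clique_triple_iff.mpr ⟨haw.1, he, hwb.1⟩)

instance : DecidableRel exampleGraph2.Adj :=
  inferInstanceAs (DecidableRel (SimpleGraph.fromEdgeSet _).Adj)

lemma exampleGraph2_cliqueFree : exampleGraph2.CliqueFree 3 :=
  cliqueFinset_eq_empty_iff.mp (by decide)

lemma twoSC_exampleGraph2 : TwoSC exampleGraph2 :=
  .of_edist_le_two (fun u v => edist_le_two_iff.mpr (by revert u v; decide)) (by decide)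

/-- The graph of Example 2 is a triangle-free edge-minimal 2-self-centered graph in which
the vertex x = 6 is the unique common neighbor of the non-adjacent vertices
y = 0 and z = 3. -/
theorem stmt_14 :
    exampleGraph2.CliqueFree 3 ∧
    TwoSC exampleGraph2 ∧
    (∀ e ∈ exampleGraph2.edgeSet, ¬ TwoSC (exampleGraph2.deleteEdges {e})) ∧
    (¬ exampleGraph2.Adj 0 3 ∧ exampleGraph2.Adj 6 0 ∧ exampleGraph2.Adj 6 3 ∧
      ∀ x : Fin 7, exampleGraph2.Adj 0 x → exampleGraph2.Adj x 3 → x = 6) :=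
  ⟨exampleGraph2_cliqueFree, twoSC_exampleGraph2,
    fun _ he => exampleGraph2_cliqueFree.not_twoSC_deleteEdges he, by decide⟩
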